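/- arXiv:1804.02197 — 3 statements merged into one kernel-verified Lean document; each statement's English description precedes it below -/
import Mathlib

section
/- Let 0 ≤ α < 1/2 and δ ∈ (0, π/2). Suppose F : ℂ → ℂ satisfies |F(z)| ≤ M|z|^{−2α} for all z ≠ 0 in the sector |arg z| ≤ δ. Then the boundary integral of |F| over each of the two boundary arcs of D_E^δ(t), parametrized as z = t·r·e^{±iδ}/(1 + r·e^{±iδ}) for r ∈ (0,∞), is bounded by M·t^{1−2α}·(1/(1−2α) + 1). -/
/-!
On the arc `z = t r e^{is} / w` with `w = 1 + r e^{is}`. Since `cos s ≥ 0`, the identity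
`|w|² = 1 + 2 r cos s + r²` gives `|w| ≥ max 1 r`. Moreover `z = t r (r + e^{-is})⁻¹`, and
`r + e^{-is}` has nonnegative real part and modulus at least `1`, so its argument
`arcsin (-sin s / |r + e^{-is}|)` has modulus at most `|s|`: the arc stays in the sector where
the bound on `F` holds. Hence, with `p = -2α`, the integrand is at most
`M t^{p+1} r^p |w|^{-(p+2)}`, which is at most `M t^{p+1}` times `r^p` on `(0, 1]` and `r^{-2}`
on `(1, ∞)`; these two pieces integrate to `1/(p+1)` and `1`.
-/

open Complex Real Set MeasureTheory

lemma sq_norm_one_add_ofReal_mul_exp_mul_I (r s : ℝ) :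
    ‖1 + r * exp (s * I)‖ ^ 2 = 1 + 2 * r * Real.cos s + r ^ 2 := by
  rw [Complex.sq_norm, exp_mul_I, ← ofReal_cos, ← ofReal_sin, normSq_apply]
  simp only [add_re, one_re, mul_re, ofReal_re, ofReal_im, add_im, one_im, mul_im, I_re, I_im]
  nlinarith [Real.sin_sq_add_cos_sq s]

section
variable {r s : ℝ} (hr : 0 ≤ r) (hs : 0 ≤ Real.cos s)
include hr hs

lemma one_le_norm_one_add_ofReal_mul_exp_mul_I : 1 ≤ ‖1 + r * exp (s * I)‖ := by
  nlinarith [sq_norm_one_add_ofReal_mul_exp_mul_I r s, norm_nonneg (1 + r * exp (s * I))]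

lemma le_norm_one_add_ofReal_mul_exp_mul_I : r ≤ ‖1 + r * exp (s * I)‖ := by
  nlinarith [sq_norm_one_add_ofReal_mul_exp_mul_I r s, norm_nonneg (1 + r * exp (s * I))]
end

lemma abs_arg_ofReal_add_exp_mul_I_le {r s : ℝ} (hr : 0 ≤ r) (hs : |s| ≤ π / 2) :
    |arg (r + exp (s * I))| ≤ |s| := by
  have hcos : 0 ≤ Real.cos s := cos_nonneg_of_mem_Icc (abs_le.mp hs)
  have hfactor : (r : ℂ) + exp (s * I) = exp (s * I) * (1 + r * exp ((-s : ℝ) * I)) := by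
    rw [mul_add, mul_one, mul_left_comm, ← Complex.exp_add]; push_cast; ring_nf; simp
  have hnorm : 1 ≤ ‖(r : ℂ) + exp (s * I)‖ := by
    rw [hfactor, norm_mul, norm_exp_ofReal_mul_I, one_mul]
    exact one_le_norm_one_add_ofReal_mul_exp_mul_I hr (by rwa [Real.cos_neg])
  have hre : 0 ≤ ((r : ℂ) + exp (s * I)).re := by
    rw [add_re, ofReal_re, exp_ofReal_mul_I_re]; positivity
  have him : ((r : ℂ) + exp (s * I)).im = Real.sin s := by
    rw [add_im, ofReal_im, exp_ofReal_mul_I_im, zero_add]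
  set x := Real.sin s / ‖(r : ℂ) + exp (s * I)‖
  have hx : |x| ≤ Real.sin |s| := by
    rw [← abs_sin_eq_sin_abs_of_abs_le_pi (hs.trans (by linarith [pi_pos])), abs_div, abs_norm]
    exact div_le_self (abs_nonneg _) hnorm
  have harcsin : Real.arcsin (Real.sin |s|) = |s| :=
    arcsin_sin (by linarith [pi_pos, abs_nonneg s]) hs
  obtain ⟨hx_lo, hx_hi⟩ := abs_le.mp hx
  rw [arg_of_re_nonneg hre, him, abs_le, neg_le, ← arcsin_neg, ← harcsin]
  exact ⟨arcsin_le_arcsin (neg_le.mp hx_lo), arcsin_le_arcsin hx_hi⟩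

lemma eyeArc_eq_ofReal_mul_inv (t r s : ℝ) :
    (t : ℂ) * r * exp (s * I) / (1 + r * exp (s * I)) =
      ((t * r : ℝ) : ℂ) * (r + exp ((-s : ℝ) * I))⁻¹ := by
  have he : exp ((-s : ℝ) * I) * exp (s * I) = 1 := by
    rw [← Complex.exp_add]; push_cast; ring_nf; exact Complex.exp_zero
  have hfactor : (r : ℂ) + exp ((-s : ℝ) * I) = exp ((-s : ℝ) * I) * (1 + r * exp (s * I)) := by
    rw [mul_add, mul_one, mul_left_comm, he, mul_one, add_comm]
  rw [hfactor, mul_inv, ← mul_assoc, ← inv_eq_of_mul_eq_one_left he, inv_inv]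
  push_cast
  ring

lemma abs_arg_eyeArc_le {t r s : ℝ} (ht : 0 < t) (hr : 0 < r) (hs : |s| ≤ π / 2) :
    |arg ((t : ℂ) * r * exp (s * I) / (1 + r * exp (s * I)))| ≤ |s| := by
  have harg : |arg ((r : ℂ) + exp ((-s : ℝ) * I))| ≤ |s| := by
    simpa only [abs_neg] using abs_arg_ofReal_add_exp_mul_I_le hr.le (s := -s) (by rwa [abs_neg])
  have hne : arg ((r : ℂ) + exp ((-s : ℝ) * I)) ≠ π := by
    intro h
    rw [h, abs_of_pos pi_pos] at harg
    linarith [pi_pos]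
  rwa [eyeArc_eq_ofReal_mul_inv, arg_real_mul _ (mul_pos ht hr), arg_inv, if_neg hne, abs_neg]

noncomputable def eyeArcMajorant (p r : ℝ) : ℝ := if r ≤ 1 then r ^ p else r ^ (-2 : ℝ)

lemma rpow_mul_rpow_le_eyeArcMajorant {p r A : ℝ} (hp : -2 ≤ p) (hr : 0 < r) (hA : 1 ≤ A)
    (hrA : r ≤ A) : r ^ p * A ^ (-(p + 2)) ≤ eyeArcMajorant p r := by
  unfold eyeArcMajorant
  split_ifs
  · exact mul_le_of_le_one_right (rpow_nonneg hr.le p)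
      (rpow_le_one_of_one_le_of_nonpos hA (by linarith))
  · calc r ^ p * A ^ (-(p + 2)) ≤ r ^ p * r ^ (-(p + 2)) :=
          mul_le_mul_of_nonneg_left (rpow_le_rpow_of_nonpos hr hrA (by linarith))
            (rpow_nonneg hr.le p)
      _ = r ^ (-2 : ℝ) := by rw [← rpow_add hr]; ring_nf

section
variable {p : ℝ} (hp : -1 < p)
include hp

lemma integrableOn_Ioc_eyeArcMajorant : IntegrableOn (eyeArcMajorant p) (Ioc 0 1) :=
  (intervalIntegral.intervalIntegrable_rpow' hp).1.congr_fun (fun _ hr => (if_pos hr.2).symm)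
    measurableSet_Ioc

lemma integral_Ioc_eyeArcMajorant : ∫ r in Ioc 0 1, eyeArcMajorant p r = 1 / (p + 1) := by
  rw [setIntegral_congr_fun measurableSet_Ioc (f := eyeArcMajorant p) (g := fun r => r ^ p)
      (fun _ hr => if_pos hr.2),
    ← intervalIntegral.integral_of_le zero_le_one, integral_rpow (Or.inl hp),
    one_rpow, zero_rpow (by linarith)]
  ring

omit hp in
lemma integrableOn_Ioi_eyeArcMajorant : IntegrableOn (eyeArcMajorant p) (Ioi 1) :=
  (integrableOn_Ioi_rpow_of_lt (by norm_num) one_pos).congr_fun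
    (fun _ hr => (if_neg (not_le.mpr hr)).symm) measurableSet_Ioi

omit hp in
lemma integral_Ioi_one_eyeArcMajorant : ∫ r in Ioi 1, eyeArcMajorant p r = 1 := by
  rw [setIntegral_congr_fun measurableSet_Ioi (f := eyeArcMajorant p) (g := fun r => r ^ (-2 : ℝ))
      (fun _ hr => if_neg (not_le.mpr hr)), integral_Ioi_rpow_of_lt (by norm_num) one_pos]
  norm_num

lemma integrableOn_Ioi_zero_eyeArcMajorant : IntegrableOn (eyeArcMajorant p) (Ioi 0) := by
  rw [← Ioc_union_Ioi_eq_Ioi zero_le_one]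
  exact (integrableOn_Ioc_eyeArcMajorant hp).union integrableOn_Ioi_eyeArcMajorant

lemma integral_Ioi_zero_eyeArcMajorant :
    ∫ r in Ioi 0, eyeArcMajorant p r = 1 / (p + 1) + 1 := by
  rw [← Ioc_union_Ioi_eq_Ioi zero_le_one, setIntegral_union (Ioc_disjoint_Ioi le_rfl)
    measurableSet_Ioi (integrableOn_Ioc_eyeArcMajorant hp) integrableOn_Ioi_eyeArcMajorant,
    integral_Ioc_eyeArcMajorant hp, integral_Ioi_one_eyeArcMajorant]

end

lemma eyeArc_integrand_le {F : ℂ → ℂ} {M p t r s : ℝ} (hM : 0 ≤ M) (hp : -2 ≤ p) (ht : 0 < t)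
    (hr : 0 < r) (hs : |s| ≤ π / 2)
    (hF : ∀ z : ℂ, z ≠ 0 → |arg z| ≤ |s| → ‖F z‖ ≤ M * ‖z‖ ^ p) :
    ‖F ((t : ℂ) * r * exp (s * I) / (1 + r * exp (s * I)))‖ *
        ‖(t : ℂ) / (1 + r * exp (s * I)) ^ 2‖ ≤ M * t ^ (p + 1) * eyeArcMajorant p r := by
  have hcos : 0 ≤ Real.cos s := cos_nonneg_of_mem_Icc (abs_le.mp hs)
  set w : ℂ := 1 + r * exp (s * I)
  have hw1 : 1 ≤ ‖w‖ := one_le_norm_one_add_ofReal_mul_exp_mul_I hr.le hcos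
  have hw0 : 0 < ‖w‖ := one_pos.trans_le hw1
  set z : ℂ := t * r * exp (s * I) / w
  have hz : ‖z‖ = t * r / ‖w‖ := by
    simp only [z, norm_div, norm_mul, norm_exp_ofReal_mul_I, norm_real, Real.norm_eq_abs,
      abs_of_pos ht, abs_of_pos hr, mul_one]
  have hz0 : z ≠ 0 := norm_pos_iff.mp (by rw [hz]; positivity)
  have hdz : ‖(t : ℂ) / w ^ 2‖ = t / ‖w‖ ^ 2 := by
    rw [norm_div, norm_pow, norm_real, Real.norm_eq_abs, abs_of_pos ht]
  calc ‖F z‖ * ‖(t : ℂ) / w ^ 2‖ ≤ M * (t * r / ‖w‖) ^ p * (t / ‖w‖ ^ 2) := by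
        rw [hdz, ← hz]
        exact mul_le_mul_of_nonneg_right (hF z hz0 (abs_arg_eyeArc_le ht hr hs)) (by positivity)
    _ = M * t ^ (p + 1) * (r ^ p * ‖w‖ ^ (-(p + 2))) := by
        rw [div_rpow (by positivity) hw0.le, mul_rpow ht.le hr.le, rpow_add_one ht.ne',
          rpow_neg hw0.le, rpow_add hw0, rpow_two]
        field_simp
    _ ≤ M * t ^ (p + 1) * eyeArcMajorant p r :=
        mul_le_mul_of_nonneg_left
          (rpow_mul_rpow_le_eyeArcMajorant hp hr hw1
            (le_norm_one_add_ofReal_mul_exp_mul_I hr.le hcos))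
          (by positivity)

theorem stmt3_general (α δ t M : ℝ) (hα : α < 1 / 2) (hδ0 : 0 < δ) (hδ : δ < π / 2)
    (ht : 0 < t) (F : ℂ → ℂ)
    (hF : ∀ z : ℂ, z ≠ 0 → |Complex.arg z| ≤ δ → ‖F z‖ ≤ M * ‖z‖ ^ (-(2 * α))) :
    ∀ s : ℝ, s = δ ∨ s = -δ →
      (∫ r in Set.Ioi (0 : ℝ),
          ‖F ((t : ℂ) * (r : ℂ) * Complex.exp ((s : ℂ) * Complex.I) /
              (1 + (r : ℂ) * Complex.exp ((s : ℂ) * Complex.I)))‖ *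
            ‖(t : ℂ) / (1 + (r : ℂ) * Complex.exp ((s : ℂ) * Complex.I)) ^ 2‖)
        ≤ M * t ^ (1 - 2 * α) * (1 / (1 - 2 * α) + 1) := by
  intro s hs
  have hM : 0 ≤ M := by
    simpa using (norm_nonneg (F 1)).trans (hF 1 one_ne_zero (by simpa using hδ0.le))
  have hsδ : |s| = δ := by rcases hs with rfl | rfl <;> simp [abs_of_pos hδ0]
  have hp : -1 < -(2 * α) := by linarith
  calc _ ≤ ∫ r in Ioi 0, M * t ^ (-(2 * α) + 1) * eyeArcMajorant (-(2 * α)) r := by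
        refine integral_mono_of_nonneg (Filter.Eventually.of_forall fun r => by positivity)
          ((integrableOn_Ioi_zero_eyeArcMajorant hp).const_mul _) ?_
        filter_upwards [ae_restrict_mem measurableSet_Ioi] with r hr
        exact eyeArc_integrand_le hM (by linarith) ht hr (by rw [hsδ]; linarith)
          fun z hz harg => hF z hz (hsδ ▸ harg)
    _ = M * t ^ (1 - 2 * α) * (1 / (1 - 2 * α) + 1) := by
        rw [integral_const_mul, integral_Ioi_zero_eyeArcMajorant hp]
        ring_nf

/-- If `0 ≤ α < 1/2`, `0 < δ < π/2` and `|F(z)| ≤ M |z|^{-2α}` on the sector `|arg z| ≤ δ`,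
then the integral of `|F|` over each boundary arc of the eye-shaped domain `D_E^δ(t)`,
parametrized as `z = t r e^{±iδ}/(1 + r e^{±iδ})` for `r ∈ (0,∞)` (with
`|dz/dr| = |t/(1 + r e^{±iδ})²|`), is bounded by `M t^{1-2α} (1/(1-2α) + 1)`. -/
theorem stmt3 (α δ t M : ℝ) (hα0 : 0 ≤ α) (hα : α < 1 / 2) (hδ0 : 0 < δ) (hδ : δ < π / 2)
    (ht : 0 < t) (F : ℂ → ℂ)
    (hF : ∀ z : ℂ, z ≠ 0 → |Complex.arg z| ≤ δ → ‖F z‖ ≤ M * ‖z‖ ^ (-(2 * α))) :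
    ∀ s : ℝ, s = δ ∨ s = -δ →
      (∫ r in Set.Ioi (0 : ℝ),
          ‖F ((t : ℂ) * (r : ℂ) * Complex.exp ((s : ℂ) * Complex.I) /
              (1 + (r : ℂ) * Complex.exp ((s : ℂ) * Complex.I)))‖ *
            ‖(t : ℂ) / (1 + (r : ℂ) * Complex.exp ((s : ℂ) * Complex.I)) ^ 2‖)
        ≤ M * t ^ (1 - 2 * α) * (1 / (1 - 2 * α) + 1) :=
  stmt3_general α δ t M hα hδ0 hδ ht F hF
end

section
/- Let 0 ≤ α < 1/2, t > 0, d ∈ (0, π/2), and M, ω ≥ 0. Suppose |F(ψ_t(u+iv))| ≤ M·|ψ_t(u+iv)|^{−2α}·e^{ω·Re(ψ_t(u+iv))} for all u ∈ ℝ, |v| ≤ d. Then the integral of |F| over the vertical segment ψ_t(u + i[−d,d]) is bounded by 2·M·π·e^{ωt}·t^{1−2α}·(√2)^{2α}, uniformly in u ∈ ℝ. -/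
/-! For `|Im w| ≤ π/2` the number `z = e^w` has `Re z ≥ 0`, hence `|z + 1| ≥ max 1 |z|`. So
`|ψ_t(w)| = t|z|/|z+1| ≤ t` and `|∂ᵥψ_t(u+iv)| = |ψ_t|/|z+1| ≤ |ψ_t|`, which together with
`1 - 2α ≥ 0` bounds `|ψ_t|^{-2α} |∂ᵥψ_t|` by `t^{1-2α}`. The integrand is therefore at most
`M e^{ωt} t^{1-2α}` on a segment of length `2d < π`. -/

open Complex Real Set

namespace Complex

lemma normSq_add_one (z : ℂ) : normSq (z + 1) = normSq z + 2 * z.re + 1 := by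
  rw [normSq_add, normSq_one, map_one, mul_one]; ring

variable {z : ℂ}

lemma one_le_norm_add_one_of_re_nonneg (hz : 0 ≤ z.re) : 1 ≤ ‖z + 1‖ := by
  refine (sq_le_sq₀ zero_le_one (norm_nonneg _)).mp ?_
  rw [one_pow, Complex.sq_norm, normSq_add_one]
  linarith [normSq_nonneg z]

lemma norm_le_norm_add_one_of_re_nonneg (hz : 0 ≤ z.re) : ‖z‖ ≤ ‖z + 1‖ := by
  refine (sq_le_sq₀ (norm_nonneg _) (norm_nonneg _)).mp ?_
  rw [Complex.sq_norm, Complex.sq_norm, normSq_add_one]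
  linarith

lemma re_exp_nonneg_of_abs_im_le {w : ℂ} (hw : |w.im| ≤ π / 2) : 0 ≤ (cexp w).re := by
  rw [exp_re]
  exact mul_nonneg (Real.exp_pos _).le (Real.cos_nonneg_of_mem_Icc (abs_le.mp hw))

end Complex

section

variable {t : ℝ} {z : ℂ}

lemma norm_mul_div_add_one_le (ht : 0 ≤ t) (hz : 0 ≤ z.re) : ‖(t : ℂ) * z / (z + 1)‖ ≤ t := by
  have hA := one_le_norm_add_one_of_re_nonneg hz
  rw [norm_div, norm_mul, norm_real, Real.norm_of_nonneg ht, div_le_iff₀ (by linarith)]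
  exact mul_le_mul_of_nonneg_left (norm_le_norm_add_one_of_re_nonneg hz) ht

lemma norm_mul_div_add_one_rpow_neg_mul_le (ht : 0 < t) (hz0 : z ≠ 0) (hz : 0 ≤ z.re) {p : ℝ}
    (hp : p ≤ 1) :
    ‖(t : ℂ) * z / (z + 1)‖ ^ (-p) * ‖(t : ℂ) * z / (z + 1) ^ 2‖ ≤ t ^ (1 - p) := by
  set A := ‖z + 1‖
  set r := ‖(t : ℂ) * z / (z + 1)‖
  have hA : 1 ≤ A := one_le_norm_add_one_of_re_nonneg hz
  have hr : 0 < r := norm_pos_iff.mpr (div_ne_zero (mul_ne_zero (by exact_mod_cast ht.ne') hz0)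
    (norm_pos_iff.mp (by linarith)))
  have hderiv : ‖(t : ℂ) * z / (z + 1) ^ 2‖ = r / A := by
    simp only [r, A, norm_div, norm_pow]; ring
  calc r ^ (-p) * ‖(t : ℂ) * z / (z + 1) ^ 2‖ = r ^ (1 - p) / A := by
        rw [hderiv, sub_eq_neg_add, Real.rpow_add hr, Real.rpow_one]; ring
    _ ≤ r ^ (1 - p) := div_le_self (Real.rpow_nonneg hr.le _) hA
    _ ≤ t ^ (1 - p) := Real.rpow_le_rpow hr.le (norm_mul_div_add_one_le ht.le hz) (by linarith)

end

lemma HasDerivAt.comp_add_ofReal_mul_I {f : ℂ → ℂ} {f' : ℂ} {u v : ℝ}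
    (hf : HasDerivAt f f' (u + v * I)) : HasDerivAt (fun s : ℝ => f (u + s * I)) (f' * I) v := by
  have hline : HasDerivAt (fun s : ℝ => (u : ℂ) + s * I) I v := by
    simpa using ((hasDerivAt_id v).ofReal_comp.mul_const I).const_add (u : ℂ)
  exact hf.comp v hline

noncomputable def logisticMap (t : ℝ) (w : ℂ) : ℂ := t * cexp w / (cexp w + 1)

lemma hasDerivAt_logisticMap (t : ℝ) {w : ℂ} (hw : cexp w + 1 ≠ 0) :
    HasDerivAt (logisticMap t) (t * cexp w / (cexp w + 1) ^ 2) w := by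
  refine (((hasDerivAt_exp w).const_mul (t : ℂ)).div ((hasDerivAt_exp w).add_const 1)
    hw).congr_deriv ?_
  field_simp
  ring

lemma norm_comp_logisticMap_mul_norm_deriv_le {F : ℂ → ℂ} {p t M ω u v : ℝ} (hp : p ≤ 1)
    (ht : 0 < t) (hM : 0 ≤ M) (hω : 0 ≤ ω) (hv : |v| ≤ π / 2)
    (hF : ‖F (logisticMap t (u + v * I))‖ ≤ M * ‖logisticMap t (u + v * I)‖ ^ (-p) *
      rexp (ω * (logisticMap t (u + v * I)).re)) :
    ‖F (logisticMap t (u + v * I))‖ * ‖deriv (fun s : ℝ => logisticMap t (u + s * I)) v‖ ≤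
      M * rexp (ω * t) * t ^ (1 - p) := by
  set w : ℂ := u + v * I
  have hz : 0 ≤ (cexp w).re := re_exp_nonneg_of_abs_im_le (by simpa [w] using hv)
  have hne : cexp w + 1 ≠ 0 :=
    norm_pos_iff.mp (by linarith [one_le_norm_add_one_of_re_nonneg hz])
  have hψ : ‖logisticMap t w‖ ≤ t := norm_mul_div_add_one_le ht.le hz
  have hderiv : ‖deriv (fun s : ℝ => logisticMap t (u + s * I)) v‖ =
      ‖(t : ℂ) * cexp w / (cexp w + 1) ^ 2‖ := by
    rw [(hasDerivAt_logisticMap t hne).comp_add_ofReal_mul_I.deriv, norm_mul, norm_I, mul_one]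
  have hexp : rexp (ω * (logisticMap t w).re) ≤ rexp (ω * t) :=
    exp_le_exp.mpr (mul_le_mul_of_nonneg_left ((re_le_norm _).trans hψ) hω)
  calc _ ≤ M * ‖logisticMap t w‖ ^ (-p) * rexp (ω * (logisticMap t w).re) *
        ‖deriv (fun s : ℝ => logisticMap t (u + s * I)) v‖ :=
        mul_le_mul_of_nonneg_right hF (norm_nonneg _)
    _ = M * rexp (ω * (logisticMap t w).re) *
        (‖logisticMap t w‖ ^ (-p) * ‖(t : ℂ) * cexp w / (cexp w + 1) ^ 2‖) := by
        rw [hderiv]; ring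
    _ ≤ M * rexp (ω * t) * t ^ (1 - p) := by
        gcongr
        exact norm_mul_div_add_one_rpow_neg_mul_le ht (exp_ne_zero w) hz hp

/-- Let `0 ≤ α < 1/2`, `t > 0`, `0 < d < π/2` and `M, ω ≥ 0`. If
`|F(ψ_t(u+iv))| ≤ M |ψ_t(u+iv)|^{-2α} e^{ω Re ψ_t(u+iv)}` for all `u ∈ ℝ`, `|v| ≤ d`,
where `ψ_t(w) = t e^w/(e^w+1)`, then the integral of `|F|` over the vertical segment
`ψ_t(u + i[-d,d])` is bounded by `2 M π e^{ωt} t^{1-2α} (√2)^{2α}`, uniformly in `u`. -/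
theorem stmt6 (α t d M ω : ℝ) (hα0 : 0 ≤ α) (hα : α < 1 / 2) (ht : 0 < t)
    (hd0 : 0 < d) (hd : d < π / 2) (hM : 0 ≤ M) (hω : 0 ≤ ω)
    (F ψ : ℂ → ℂ)
    (hψ : ∀ w : ℂ, ψ w = (t : ℂ) * Complex.exp w / (Complex.exp w + 1))
    (hF : ∀ u v : ℝ, |v| ≤ d →
      ‖F (ψ ((u : ℂ) + (v : ℂ) * Complex.I))‖
        ≤ M * ‖ψ ((u : ℂ) + (v : ℂ) * Complex.I)‖ ^ (-(2 * α)) *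
            Real.exp (ω * (ψ ((u : ℂ) + (v : ℂ) * Complex.I)).re)) :
    ∀ u : ℝ,
      (∫ v in Set.Icc (-d) d,
          ‖F (ψ ((u : ℂ) + (v : ℂ) * Complex.I))‖ *
            ‖deriv (fun s : ℝ => ψ ((u : ℂ) + (s : ℂ) * Complex.I)) v‖)
        ≤ 2 * M * π * Real.exp (ω * t) * t ^ (1 - 2 * α) * Real.sqrt 2 ^ (2 * α) := by
  intro u
  obtain rfl : ψ = logisticMap t := funext hψ
  set C := M * rexp (ω * t) * t ^ (1 - 2 * α)
  have hbound : ∀ v ∈ Icc (-d) d, ‖‖F (logisticMap t (u + v * I))‖ *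
      ‖deriv (fun s : ℝ => logisticMap t (u + s * I)) v‖‖ ≤ C := by
    intro v hv
    have hv' : |v| ≤ d := abs_le.mpr hv
    rw [Real.norm_of_nonneg (by positivity)]
    exact norm_comp_logisticMap_mul_norm_deriv_le (by linarith) ht hM hω (hv'.trans hd.le)
      (hF u v hv')
  have hsqrt : 1 ≤ √2 ^ (2 * α) := one_le_rpow (by simp [Real.one_le_sqrt]) (by linarith)
  have hlength : 2 * d ≤ 2 * π * √2 ^ (2 * α) := by nlinarith [pi_pos]
  calc _ ≤ C * MeasureTheory.volume.real (Icc (-d) d) :=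
        (le_abs_self _).trans (MeasureTheory.norm_setIntegral_le_of_norm_le_const
          measure_Icc_lt_top hbound)
    _ = 2 * d * C := by rw [volume_real_Icc_of_le (by linarith)]; ring
    _ ≤ 2 * π * √2 ^ (2 * α) * C := by gcongr
    _ = _ := by ring
end

section
/- Let F₁, F₂ be compact operators on a Hilbert space H with singular values σ¹_k, σ²_k (nonincreasing). Then the singular values σ_k of F₁ + F₂ satisfy σ_{j+k−1} ≤ σ¹_j + σ²_k for all positive integers j, k (Weyl/Ky Fan inequality). -/
open ContinuousLinearMap

/-- The `k`-th singular value (`k ≥ 1`) of a compact operator, characterized as the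
`(k-1)`-th approximation number: the distance in operator norm to the operators of
rank `< k`. -/
noncomputable def sv {H W : Type*} [NormedAddCommGroup H] [InnerProductSpace ℂ H]
    [NormedAddCommGroup W] [InnerProductSpace ℂ W] (T : H →L[ℂ] W) (k : ℕ) : ℝ :=
  sInf ((fun F : H →L[ℂ] W => ‖T - F‖) ''
    {F : H →L[ℂ] W | LinearMap.rank (F : H →ₗ[ℂ] W) < (k : Cardinal)})

/-- Weyl's (Ky Fan's) inequality: if `F₁, F₂` are compact operators on a Hilbert space `H`
with singular values `σ¹, σ²`, then the singular values of `F₁ + F₂` satisfy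
`σ_{j+k-1}(F₁+F₂) ≤ σ¹_j + σ²_k` for all `j, k ≥ 1`. -/
theorem stmt8 {H : Type*} [NormedAddCommGroup H] [InnerProductSpace ℂ H] [CompleteSpace H]
    (F₁ F₂ : H →L[ℂ] H) (h₁ : IsCompactOperator ⇑F₁) (h₂ : IsCompactOperator ⇑F₂)
    (j k : ℕ) (hj : 1 ≤ j) (hk : 1 ≤ k) :
    sv (F₁ + F₂) (j + k - 1) ≤ sv F₁ j + sv F₂ k := by
  set S : (H →L[ℂ] H) → ℕ → Set ℝ := fun T m =>
    ((fun F : H →L[ℂ] H => ‖T - F‖) ''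
      {F : H →L[ℂ] H | LinearMap.rank (F : H →ₗ[ℂ] H) < (m : Cardinal)}) with hS
  have hmem0 : ∀ (T : H →L[ℂ] H) (m : ℕ), 1 ≤ m → (S T m).Nonempty := by
    intro T m hm
    refine ⟨‖T - 0‖, ⟨0, ?_, rfl⟩⟩
    simp only [Set.mem_setOf_eq]
    have : LinearMap.rank ((0 : H →L[ℂ] H) : H →ₗ[ℂ] H) = 0 := by
      simp [LinearMap.rank]
    rw [this]
    exact_mod_cast hm
  have hbdd : ∀ (T : H →L[ℂ] H) (m : ℕ), BddBelow (S T m) := by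
    intro T m
    exact ⟨0, fun x ⟨F, _, hF⟩ => hF ▸ norm_nonneg _⟩
  -- key pointwise estimate
  have key : ∀ G₁ ∈ {F : H →L[ℂ] H | LinearMap.rank (F : H →ₗ[ℂ] H) < (j : Cardinal)},
      ∀ G₂ ∈ {F : H →L[ℂ] H | LinearMap.rank (F : H →ₗ[ℂ] H) < (k : Cardinal)},
      sv (F₁ + F₂) (j + k - 1) ≤ ‖F₁ - G₁‖ + ‖F₂ - G₂‖ := by
    intro G₁ hG₁ G₂ hG₂
    have hr : LinearMap.rank ((G₁ + G₂ : H →L[ℂ] H) : H →ₗ[ℂ] H) < ((j + k - 1 : ℕ) : Cardinal) := by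
      have hfin₁ : LinearMap.rank (G₁ : H →ₗ[ℂ] H) < Cardinal.aleph0 :=
        hG₁.trans (Cardinal.nat_lt_aleph0 j)
      have hfin₂ : LinearMap.rank (G₂ : H →ₗ[ℂ] H) < Cardinal.aleph0 :=
        hG₂.trans (Cardinal.nat_lt_aleph0 k)
      obtain ⟨m₁, hm₁⟩ := Cardinal.lt_aleph0.mp hfin₁
      obtain ⟨m₂, hm₂⟩ := Cardinal.lt_aleph0.mp hfin₂
      have hlt₁ : m₁ < j := by
        have := hG₁; rw [Set.mem_setOf_eq, hm₁] at this; exact_mod_cast this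
      have hlt₂ : m₂ < k := by
        have := hG₂; rw [Set.mem_setOf_eq, hm₂] at this; exact_mod_cast this
      have hsum : LinearMap.rank ((G₁ + G₂ : H →L[ℂ] H) : H →ₗ[ℂ] H)
          ≤ ((m₁ + m₂ : ℕ) : Cardinal) := by
        have := LinearMap.rank_add_le (G₁ : H →ₗ[ℂ] H) (G₂ : H →ₗ[ℂ] H)
        rw [hm₁, hm₂] at this
        simpa using this
      refine hsum.trans_lt ?_
      exact_mod_cast (by omega : m₁ + m₂ < j + k - 1)
    have hmem : ‖(F₁ + F₂) - (G₁ + G₂)‖ ∈ S (F₁ + F₂) (j + k - 1) :=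
      ⟨G₁ + G₂, hr, rfl⟩
    calc sv (F₁ + F₂) (j + k - 1) ≤ ‖(F₁ + F₂) - (G₁ + G₂)‖ :=
          csInf_le (hbdd _ _) hmem
      _ ≤ ‖F₁ - G₁‖ + ‖F₂ - G₂‖ := by
          rw [show F₁ + F₂ - (G₁ + G₂) = (F₁ - G₁) + (F₂ - G₂) by abel]
          exact norm_add_le _ _
  have : sv (F₁ + F₂) (j + k - 1) - sv F₂ k ≤ sv F₁ j := by
    refine le_csInf (hmem0 F₁ j hj) ?_
    rintro x ⟨G₁, hG₁, rfl⟩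
    rw [sub_le_iff_le_add, ← sub_le_iff_le_add']
    refine le_csInf (hmem0 F₂ k hk) ?_
    rintro y ⟨G₂, hG₂, rfl⟩
    rw [sub_le_iff_le_add']
    exact key G₁ hG₁ G₂ hG₂
  linarith
end
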